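/- Vandermonde evaluation at roots of unity: fix n ≥ 2, 1 ≤ ℓ ≤ n-1, and set z_k := e^{(2πi/n)((n-ℓ+1)/2 + k - 1)} for 1 ≤ k ≤ ℓ. For any tuple h = (h₁,...,h_ℓ) of distinct elements of {0,...,n-1}, the determinant of the ℓ×ℓ matrix A with A(j,k) = z_k^{h_j} equals sgn(σ_h) · (-1)^{Σ_j h_j} · i^{ℓ(ℓ-1)/2} · ∏_{1 ≤ j < k ≤ ℓ} |e^{2πi h_k/n} - e^{2πi h_j/n}|, where σ_h is the permutation sorting h into increasing order. -/

import Mathlib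

/-!
With `ζ = e^{2πi/n}`, the entry `z_k^{h_j}` is `e^{πi(n-ℓ+1)h_j/n} (ζ^{h_j})^k`, so the matrix is a
Vandermonde matrix in the points `ζ^{h_j}` with rows rescaled, and sorting the rows costs `sgn σ`.
For `a < b < n` the half-angle `π(b-a)/n` lies in `(0, π)`, whence
`ζ^b - ζ^a = i e^{πi(a+b)/n} |ζ^b - ζ^a|`. Each `e^{πi h_j/n}` occurs in `ℓ - 1` pairs, and with
the row scaling it gives `e^{πi h_j} = (-1)^{h_j}`. What remains is the product of the moduli, i.e.
the absolute value of the Vandermonde determinant, which does not depend on the order of the rows.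
-/

/-- `z_k = e^{(2πi/n)((n-ℓ+1)/2 + k)}`, `k = 0,…,ℓ-1`: the `ℓ` roots of `(-1)^{n+ℓ+1}`
with least real part. -/
noncomputable def rootL (n ℓ : ℕ) (k : Fin ℓ) : ℂ :=
  Complex.exp ((2 * Real.pi * Complex.I / n) * (((n : ℂ) - (ℓ : ℂ) + 1) / 2 + (k : ℂ)))

open Finset Matrix Complex
open scoped Real

theorem Finset.prod_filter_fst_lt_snd {ι M : Type*} [Fintype ι] [LinearOrder ι]
    [LocallyFiniteOrderTop ι] [CommMonoid M] (f : ι → ι → M) :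
    ∏ p ∈ univ.filter (fun p : ι × ι => p.1 < p.2), f p.1 p.2 = ∏ i, ∏ j ∈ Ioi i, f i j := by
  rw [← univ_product_univ, prod_filter, prod_product]
  simp_rw [← prod_filter]
  congr! 2 with i
  ext j
  simp

theorem Fin.card_filter_fst_lt_snd (ℓ : ℕ) :
    #(univ.filter (fun p : Fin ℓ × Fin ℓ => p.1 < p.2)) = ℓ * (ℓ - 1) / 2 := by
  rw [← univ_product_univ, card_product_filter_lt, card_univ, Fintype.card_fin,
    Nat.choose_two_right]

theorem Fin.prod_prod_Ioi_mul {M : Type*} [CommMonoid M] {ℓ : ℕ} (a : Fin ℓ → M) :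
    ∏ i, ∏ j ∈ Ioi i, (a i * a j) = (∏ i, a i) ^ (ℓ - 1) := by
  have hswap : ∏ i, ∏ j ∈ Ioi i, a j = ∏ j, ∏ _i ∈ Iio j, a j := prod_comm' (by simp)
  simp_rw [prod_mul_distrib]
  rw [hswap, ← prod_mul_distrib, ← prod_pow]
  refine prod_congr rfl fun i _ => ?_
  rw [Finset.prod_const, Finset.prod_const, Fin.card_Ioi, Fin.card_Iio, ← pow_add]
  congr 1
  omega

theorem Matrix.det_vandermonde_comp_perm {R : Type*} [CommRing R] {ℓ : ℕ} (v : Fin ℓ → R)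
    (σ : Equiv.Perm (Fin ℓ)) :
    det (vandermonde (v ∘ σ)) = Equiv.Perm.sign σ * det (vandermonde v) :=
  det_permute σ (vandermonde v)

theorem Matrix.norm_det_vandermonde_comp_perm {R : Type*} [NormedCommRing R] [NormMulClass R]
    [NormOneClass R] {ℓ : ℕ} (v : Fin ℓ → R) (σ : Equiv.Perm (Fin ℓ)) :
    ‖det (vandermonde (v ∘ σ))‖ = ‖det (vandermonde v)‖ := by
  rw [det_vandermonde_comp_perm, norm_mul]
  rcases Int.units_eq_one_or (Equiv.Perm.sign σ) with hs | hs <;> simp [hs]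

theorem Matrix.norm_det_vandermonde {R : Type*} [NormedCommRing R] [NormMulClass R]
    [NormOneClass R] {ℓ : ℕ} (v : Fin ℓ → R) :
    ‖det (vandermonde v)‖ =
      ∏ p ∈ univ.filter (fun p : Fin ℓ × Fin ℓ => p.1 < p.2), ‖v p.2 - v p.1‖ := by
  rw [det_vandermonde, prod_filter_fst_lt_snd fun i j => ‖v j - v i‖]
  simp only [_root_.norm_prod]

theorem Complex.exp_mul_I_sub_exp_mul_I (x y : ℝ) :
    exp (x * I) - exp (y * I) = 2 * Real.sin ((x - y) / 2) * I * exp (((x + y) / 2 : ℝ) * I) := by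
  have hx : (x : ℂ) * I = (x + y) / 2 * I + (x - y) / 2 * I := by ring
  have hy : (y : ℂ) * I = (x + y) / 2 * I + -((x - y) / 2 * I) := by ring
  rw [hx, hy, exp_add, exp_add, ofReal_sin, Complex.sin]
  push_cast
  ring_nf
  rw [I_sq]
  ring

theorem Complex.exp_mul_I_sub_exp_mul_I_eq_polar {x y : ℝ} (hyx : y < x) (hxy : x < y + 2 * π) :
    exp (x * I) - exp (y * I) = I * exp (((x + y) / 2 : ℝ) * I) * ‖exp (x * I) - exp (y * I)‖ := by
  have hsin : 0 < Real.sin ((x - y) / 2) :=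
    Real.sin_pos_of_pos_of_lt_pi (by linarith) (by linarith)
  have hnorm : ‖exp (x * I) - exp (y * I)‖ = 2 * Real.sin ((x - y) / 2) := by
    rw [exp_mul_I_sub_exp_mul_I, norm_mul, norm_mul, norm_mul, norm_exp_ofReal_mul_I, norm_I,
      norm_ofNat, norm_real, Real.norm_of_nonneg hsin.le, mul_one, mul_one]
  rw [hnorm, exp_mul_I_sub_exp_mul_I]
  push_cast
  ring

theorem Complex.exp_two_pi_I_div_sub_of_lt {a b n : ℕ} (hab : a < b) (hbn : b < n) :
    exp (2 * π * I * b / n) - exp (2 * π * I * a / n) =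
      I * (exp (π * I * a / n) * exp (π * I * b / n)) *
        ‖exp (2 * π * I * b / n) - exp (2 * π * I * a / n)‖ := by
  have hn : (0 : ℝ) < n := by exact_mod_cast (Nat.zero_le a).trans_lt (hab.trans hbn)
  have hab' : (a : ℝ) < b := by exact_mod_cast hab
  have hbn' : (b : ℝ) < n := by exact_mod_cast hbn
  have angle : ∀ m : ℕ, 2 * π * I * m / n = ((2 * π * m / n : ℝ) : ℂ) * I := fun m => by
    push_cast
    ring
  rw [angle, angle]
  refine (exp_mul_I_sub_exp_mul_I_eq_polar ?_ ?_).trans ?_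
  · gcongr
  · rw [div_add' _ _ _ hn.ne', div_lt_div_iff_of_pos_right hn]
    nlinarith [Real.pi_pos]
  · rw [← exp_add]
    congr 3
    push_cast
    ring

theorem det_vandermonde_exp_two_pi_I_of_strictMono {n ℓ : ℕ} {g : Fin ℓ → ℕ} (hg : StrictMono g)
    (hlt : ∀ j, g j < n) :
    det (vandermonde fun j => exp (2 * π * I * g j / n)) =
      I ^ (ℓ * (ℓ - 1) / 2) * (∏ j, exp (π * I * g j / n)) ^ (ℓ - 1) *
        ‖det (vandermonde fun j => exp (2 * π * I * g j / n))‖ := by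
  have hfactor : ∀ i, ∀ j ∈ Ioi i, exp (2 * π * I * g j / n) - exp (2 * π * I * g i / n) =
      I * (exp (π * I * g i / n) * exp (π * I * g j / n)) *
        ‖exp (2 * π * I * g j / n) - exp (2 * π * I * g i / n)‖ :=
    fun i j hj => exp_two_pi_I_div_sub_of_lt (hg (mem_Ioi.1 hj)) (hlt j)
  calc det (vandermonde fun j => exp (2 * π * I * g j / n))
      = ∏ i, ∏ j ∈ Ioi i, (exp (2 * π * I * g j / n) - exp (2 * π * I * g i / n)) :=
        det_vandermonde _
    _ = ∏ i, ∏ j ∈ Ioi i, (I * (exp (π * I * g i / n) * exp (π * I * g j / n)) *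
          ‖exp (2 * π * I * g j / n) - exp (2 * π * I * g i / n)‖) :=
        prod_congr rfl fun i _ => prod_congr rfl (hfactor i)
    _ = (∏ i : Fin ℓ, ∏ _j ∈ Ioi i, I) *
          (∏ i, ∏ j ∈ Ioi i, (exp (π * I * g i / n) * exp (π * I * g j / n))) *
          ∏ i, ∏ j ∈ Ioi i, (‖exp (2 * π * I * g j / n) - exp (2 * π * I * g i / n)‖ : ℂ) := by
        simp only [prod_mul_distrib]
    _ = _ := by
        rw [Fin.prod_prod_Ioi_mul, ← prod_filter_fst_lt_snd fun _ _ => I, prod_const,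
          Fin.card_filter_fst_lt_snd, det_vandermonde]
        simp only [norm_prod, ofReal_prod]

theorem rootL_pow (n ℓ a : ℕ) (k : Fin ℓ) :
    rootL n ℓ k ^ a = exp (π * I * (n - ℓ + 1) * a / n) * exp (2 * π * I * a / n) ^ (k : ℕ) := by
  rw [rootL, ← exp_nat_mul, ← exp_nat_mul, ← exp_add]
  congr 1
  ring

theorem exp_pi_I_mul_sub_add_one_mul_exp_pow_eq_neg_one_pow {n ℓ : ℕ} (hn : n ≠ 0) (hℓ : 1 ≤ ℓ)
    (a : ℕ) :
    exp (π * I * (n - ℓ + 1) * a / n) * exp (π * I * a / n) ^ (ℓ - 1) = (-1) ^ a := by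
  rw [← exp_nat_mul, ← exp_add, Nat.cast_sub hℓ, ← exp_pi_mul_I, ← exp_nat_mul]
  congr 1
  field_simp
  ring

theorem vandermonde_roots_eval_general (n ℓ : ℕ) (hn : 2 ≤ n) (hℓ1 : 1 ≤ ℓ)
    (h : Fin ℓ → ℕ) (hlt : ∀ j, h j < n)
    (σ : Equiv.Perm (Fin ℓ)) (hσ : StrictMono (fun j => h (σ j))) :
    Matrix.det (Matrix.of fun j k : Fin ℓ => rootL n ℓ k ^ (h j))
    = ((Equiv.Perm.sign σ : ℤ) : ℂ) * (-1 : ℂ) ^ (∑ j, h j)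
      * Complex.I ^ (ℓ * (ℓ - 1) / 2)
      * ∏ p ∈ Finset.univ.filter (fun p : Fin ℓ × Fin ℓ => p.1 < p.2),
          ((‖Complex.exp (2 * Real.pi * Complex.I * (h p.2) / n)
            - Complex.exp (2 * Real.pi * Complex.I * (h p.1) / n)‖ : ℝ) : ℂ) := by
  set x : ℕ → ℂ := fun a => exp (2 * π * I * a / n)
  set d : ℕ → ℂ := fun a => exp (π * I * (n - ℓ + 1) * a / n)
  have hrows : of (fun j k : Fin ℓ => rootL n ℓ k ^ h j) =
      of fun j k => d (h j) * vandermonde (x ∘ h) j k := by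
    ext j k
    simp [rootL_pow, x, d]
  have hperm : det (vandermonde (x ∘ h)) = Equiv.Perm.sign σ * det (vandermonde (x ∘ h ∘ σ)) := by
    simpa [Function.comp_assoc] using det_vandermonde_comp_perm (x ∘ h ∘ σ) σ⁻¹
  have hsorted : det (vandermonde (x ∘ h ∘ σ)) = I ^ (ℓ * (ℓ - 1) / 2) *
      (∏ j, exp (π * I * h (σ j) / n)) ^ (ℓ - 1) * ‖det (vandermonde (x ∘ h))‖ := by
    rw [← norm_det_vandermonde_comp_perm (x ∘ h) σ]
    exact det_vandermonde_exp_two_pi_I_of_strictMono hσ fun j => hlt (σ j)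
  have hsign : (∏ j, d (h j)) * (∏ j, exp (π * I * h (σ j) / n)) ^ (ℓ - 1) = (-1) ^ ∑ j, h j := by
    rw [Equiv.prod_comp σ (fun a => exp (π * I * h a / n)), ← prod_pow, ← prod_mul_distrib,
      ← prod_pow_eq_pow_sum]
    exact prod_congr rfl fun j _ =>
      exp_pi_I_mul_sub_add_one_mul_exp_pow_eq_neg_one_pow (by omega) hℓ1 (h j)
  calc det (of fun j k : Fin ℓ => rootL n ℓ k ^ h j)
      = (∏ j, d (h j)) * det (vandermonde (x ∘ h)) := by rw [hrows, det_mul_column]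
    _ = Equiv.Perm.sign σ * ((∏ j, d (h j)) * (∏ j, exp (π * I * h (σ j) / n)) ^ (ℓ - 1)) *
          I ^ (ℓ * (ℓ - 1) / 2) * ‖det (vandermonde (x ∘ h))‖ := by
        conv_lhs => rw [hperm, hsorted]
        ring
    _ = _ := by rw [hsign, norm_det_vandermonde, ofReal_prod]; rfl

/-- Vandermonde evaluation at roots of unity:
`det(z_k^{h_j}) = sgn(σ_h) (-1)^{Σ h_j} i^{ℓ(ℓ-1)/2} ∏_{j<k} |e^{2πih_k/n} - e^{2πih_j/n}|`. -/
theorem vandermonde_roots_eval (n ℓ : ℕ) (hn : 2 ≤ n) (hℓ1 : 1 ≤ ℓ) (hℓn : ℓ ≤ n - 1)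
    (h : Fin ℓ → ℕ) (hinj : Function.Injective h) (hlt : ∀ j, h j < n)
    (σ : Equiv.Perm (Fin ℓ)) (hσ : StrictMono (fun j => h (σ j))) :
    Matrix.det (Matrix.of fun j k : Fin ℓ => rootL n ℓ k ^ (h j))
    = ((Equiv.Perm.sign σ : ℤ) : ℂ) * (-1 : ℂ) ^ (∑ j, h j)
      * Complex.I ^ (ℓ * (ℓ - 1) / 2)
      * ∏ p ∈ Finset.univ.filter (fun p : Fin ℓ × Fin ℓ => p.1 < p.2),
          ((‖Complex.exp (2 * Real.pi * Complex.I * (h p.2) / n)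
            - Complex.exp (2 * Real.pi * Complex.I * (h p.1) / n)‖ : ℝ) : ℂ) :=
  vandermonde_roots_eval_general n ℓ hn hℓ1 h hlt σ hσ
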